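/- arXiv:2102.02245 — 3 statements merged into one kernel-verified Lean document; each statement's English description precedes it below -/
import Mathlib

section
/- The polynomial A = 120·a₀a₆ − 20·a₁a₅ + 8·a₂a₄ − 3·a₃² in the coefficients of a binary sextic f = Σᵢ aᵢ x₁^{6−i} x₂^i is invariant under the substitution (x₁, x₂) ↦ (a x₁ + b x₂, c x₁ + d x₂) for every matrix (a,b;c,d) in SL₂(ℂ); that is, if f' = Σᵢ aᵢ' x₁^{6−i} x₂^i denotes the transformed sextic, then 120·a₀'a₆' − 20·a₁'a₅' + 8·a₂'a₄' − 3·a₃'² = 120·a₀a₆ − 20·a₁a₅ + 8·a₂a₄ − 3·a₃². -/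
open MvPolynomial Matrix

noncomputable section

/-- The binary sextic with coefficient vector `a`. -/
def sextic (a : Fin 7 → ℂ) : MvPolynomial (Fin 2) ℂ :=
  ∑ i : Fin 7, C (a i) * X 0 ^ (6 - (i : ℕ)) * X 1 ^ (i : ℕ)

/-- The action of a matrix `γ` on binary forms by the substitution
`(x₁, x₂) ↦ (γ₀₀ x₁ + γ₀₁ x₂, γ₁₀ x₁ + γ₁₁ x₂)`. -/
def actγ (γ : Matrix.SpecialLinearGroup (Fin 2) ℂ) (p : MvPolynomial (Fin 2) ℂ) :
    MvPolynomial (Fin 2) ℂ :=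
  aeval (fun i : Fin 2 => ∑ j : Fin 2, C (γ.1 i j) * X j) p

/-- Igusa's degree-2 invariant `A` of a binary sextic. -/
def invA (a : Fin 7 → ℂ) : ℂ :=
  120 * a 0 * a 6 - 20 * a 1 * a 5 + 8 * a 2 * a 4 - 3 * (a 3) ^ 2

/-- The polynomial `A = 120 a₀a₆ − 20 a₁a₅ + 8 a₂a₄ − 3 a₃²` is an invariant of binary
sextics under the action of `SL₂(ℂ)` by linear substitution of the variables. -/
theorem invA_invariant (γ : Matrix.SpecialLinearGroup (Fin 2) ℂ) (a a' : Fin 7 → ℂ)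
    (h : sextic a' = actγ γ (sextic a)) :
    invA a' = invA a := by
  have hdet : γ.1 0 0 * γ.1 1 1 - γ.1 0 1 * γ.1 1 0 = 1 := by
    have h2 := γ.2
    rwa [Matrix.det_fin_two] at h2
  have key : ∀ t : ℂ, ∑ i : Fin 7, a' i * t ^ (i : ℕ)
      = ∑ i : Fin 7, a i * (γ.1 0 0 + γ.1 0 1 * t) ^ (6 - (i : ℕ)) * (γ.1 1 0 + γ.1 1 1 * t) ^ (i : ℕ) := by
    intro t
    have := congrArg (eval ![(1 : ℂ), t]) h
    simp [sextic, actγ, eval_sum, Fin.sum_univ_two] at this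
    exact this
  have key' : ∀ t : ℂ,
      a' 0 + a' 1 * t + a' 2 * t ^ 2 + a' 3 * t ^ 3 + a' 4 * t ^ 4 + a' 5 * t ^ 5 + a' 6 * t ^ 6
      = a 0 * (γ.1 0 0 + γ.1 0 1 * t) ^ 6
        + a 1 * (γ.1 0 0 + γ.1 0 1 * t) ^ 5 * (γ.1 1 0 + γ.1 1 1 * t)
        + a 2 * (γ.1 0 0 + γ.1 0 1 * t) ^ 4 * (γ.1 1 0 + γ.1 1 1 * t) ^ 2
        + a 3 * (γ.1 0 0 + γ.1 0 1 * t) ^ 3 * (γ.1 1 0 + γ.1 1 1 * t) ^ 3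
        + a 4 * (γ.1 0 0 + γ.1 0 1 * t) ^ 2 * (γ.1 1 0 + γ.1 1 1 * t) ^ 4
        + a 5 * (γ.1 0 0 + γ.1 0 1 * t) * (γ.1 1 0 + γ.1 1 1 * t) ^ 5
        + a 6 * (γ.1 1 0 + γ.1 1 1 * t) ^ 6 := by
    intro t
    have := key t
    simpa [Fin.sum_univ_seven, show ((2:Fin 7):ℕ)=2 from rfl, show ((3:Fin 7):ℕ)=3 from rfl, show ((4:Fin 7):ℕ)=4 from rfl, show ((5:Fin 7):ℕ)=5 from rfl, show ((6:Fin 7):ℕ)=6 from rfl] using this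
  clear key h
  set KEY := key' with hKEY
  clear_value KEY
  clear hKEY key'
  rename' KEY => key
  have h0 : a' 0 = 1*(γ.1 1 0)^6*(a 6) + 1*(γ.1 0 0)*(γ.1 1 0)^5*(a 5) + 1*(γ.1 0 0)^2*(γ.1 1 0)^4*(a 4) + 1*(γ.1 0 0)^3*(γ.1 1 0)^3*(a 3) + 1*(γ.1 0 0)^4*(γ.1 1 0)^2*(a 2) + 1*(γ.1 0 0)^5*(γ.1 1 0)*(a 1) + 1*(γ.1 0 0)^6*(a 0) := by
    linear_combination (1 : ℂ) * key 0
  have h1 : a' 1 = 6*(γ.1 1 0)^5*(γ.1 1 1)*(a 6) + 1*(γ.1 0 1)*(γ.1 1 0)^5*(a 5) + 5*(γ.1 0 0)*(γ.1 1 0)^4*(γ.1 1 1)*(a 5) + 2*(γ.1 0 0)*(γ.1 0 1)*(γ.1 1 0)^4*(a 4) + 4*(γ.1 0 0)^2*(γ.1 1 0)^3*(γ.1 1 1)*(a 4) + 3*(γ.1 0 0)^2*(γ.1 0 1)*(γ.1 1 0)^3*(a 3) + 3*(γ.1 0 0)^3*(γ.1 1 0)^2*(γ.1 1 1)*(a 3)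 + 4*(γ.1 0 0)^3*(γ.1 0 1)*(γ.1 1 0)^2*(a 2) + 2*(γ.1 0 0)^4*(γ.1 1 0)*(γ.1 1 1)*(a 2) + 5*(γ.1 0 0)^4*(γ.1 0 1)*(γ.1 1 0)*(a 1) + 1*(γ.1 0 0)^5*(γ.1 1 1)*(a 1) + 6*(γ.1 0 0)^5*(γ.1 0 1)*(a 0) := by
    linear_combination (-49 / 20 : ℂ) * key 0 + (6 : ℂ) * key 1 + (-15 / 2 : ℂ) * key 2 + (20 / 3 : ℂ) * key 3 + (-15 / 4 : ℂ) * key 4 + (6 / 5 : ℂ) * key 5 + (-1 / 6 : ℂ) * key 6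
  have h2 : a' 2 = 15*(γ.1 1 0)^4*(γ.1 1 1)^2*(a 6) + 5*(γ.1 0 1)*(γ.1 1 0)^4*(γ.1 1 1)*(a 5) + 1*(γ.1 0 1)^2*(γ.1 1 0)^4*(a 4) + 10*(γ.1 0 0)*(γ.1 1 0)^3*(γ.1 1 1)^2*(a 5) + 8*(γ.1 0 0)*(γ.1 0 1)*(γ.1 1 0)^3*(γ.1 1 1)*(a 4) + 3*(γ.1 0 0)*(γ.1 0 1)^2*(γ.1 1 0)^3*(a 3) + 6*(γ.1 0 0)^2*(γ.1 1 0)^2*(γ.1 1 1)^2*(a 4) + 9*(γ.1 0 0)^2*(γ.1 0 1)*(γ.1 1 0)^2*(γ.1 1 1)*(a 3) + 6*(γ.1 0 0)^2*(γ.1 0 1)^2*(γ.1 1 0)^2*(a 2) + 3*(γ.1 0 0)^3*(γ.1 1 0)*(γ.1 1 1)^2*(a 3) + 8*(γ.1 0 0)^3*(γ.1 0 1)*(γ.1 1 0)*(γ.1 1 1)*(a 2) + 10*(γ.1 0 0)^3*(γ.1 0 1)^2*(γ.1 1 0)*(a 1) + 1*(γ.1 0 0)^4*(γ.1 1 1)^2*(a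 2) + 5*(γ.1 0 0)^4*(γ.1 0 1)*(γ.1 1 1)*(a 1) + 15*(γ.1 0 0)^4*(γ.1 0 1)^2*(a 0) := by
    linear_combination (203 / 90 : ℂ) * key 0 + (-87 / 10 : ℂ) * key 1 + (117 / 8 : ℂ) * key 2 + (-127 / 9 : ℂ) * key 3 + (33 / 4 : ℂ) * key 4 + (-27 / 10 : ℂ) * key 5 + (137 / 360 : ℂ) * key 6
  have h3 : a' 3 = 20*(γ.1 1 0)^3*(γ.1 1 1)^3*(a 6) + 10*(γ.1 0 1)*(γ.1 1 0)^3*(γ.1 1 1)^2*(a 5) + 4*(γ.1 0 1)^2*(γ.1 1 0)^3*(γ.1 1 1)*(a 4) + 1*(γ.1 0 1)^3*(γ.1 1 0)^3*(a 3) + 10*(γ.1 0 0)*(γ.1 1 0)^2*(γ.1 1 1)^3*(a 5) + 12*(γ.1 0 0)*(γ.1 0 1)*(γ.1 1 0)^2*(γ.1 1 1)^2*(a 4) + 9*(γ.1 0 0)*(γ.1 0 1)^2*(γ.1 1 0)^2*(γ.1 1 1)*(a 3) + 4*(γ.1 0 0)*(γ.1 0 1)^3*(γ.1 1 0)^2*(a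 2) + 4*(γ.1 0 0)^2*(γ.1 1 0)*(γ.1 1 1)^3*(a 4) + 9*(γ.1 0 0)^2*(γ.1 0 1)*(γ.1 1 0)*(γ.1 1 1)^2*(a 3) + 12*(γ.1 0 0)^2*(γ.1 0 1)^2*(γ.1 1 0)*(γ.1 1 1)*(a 2) + 10*(γ.1 0 0)^2*(γ.1 0 1)^3*(γ.1 1 0)*(a 1) + 1*(γ.1 0 0)^3*(γ.1 1 1)^3*(a 3) + 4*(γ.1 0 0)^3*(γ.1 0 1)*(γ.1 1 1)^2*(a 2) + 10*(γ.1 0 0)^3*(γ.1 0 1)^2*(γ.1 1 1)*(a 1) + 20*(γ.1 0 0)^3*(γ.1 0 1)^3*(a 0) := by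
    linear_combination (-49 / 48 : ℂ) * key 0 + (29 / 6 : ℂ) * key 1 + (-461 / 48 : ℂ) * key 2 + (31 / 3 : ℂ) * key 3 + (-307 / 48 : ℂ) * key 4 + (13 / 6 : ℂ) * key 5 + (-5 / 16 : ℂ) * key 6
  have h4 : a' 4 = 15*(γ.1 1 0)^2*(γ.1 1 1)^4*(a 6) + 10*(γ.1 0 1)*(γ.1 1 0)^2*(γ.1 1 1)^3*(a 5) + 6*(γ.1 0 1)^2*(γ.1 1 0)^2*(γ.1 1 1)^2*(a 4) + 3*(γ.1 0 1)^3*(γ.1 1 0)^2*(γ.1 1 1)*(a 3) + 1*(γ.1 0 1)^4*(γ.1 1 0)^2*(a 2) + 5*(γ.1 0 0)*(γ.1 1 0)*(γ.1 1 1)^4*(a 5) + 8*(γ.1 0 0)*(γ.1 0 1)*(γ.1 1 0)*(γ.1 1 1)^3*(a 4) + 9*(γ.1 0 0)*(γ.1 0 1)^2*(γ.1 1 0)*(γ.1 1 1)^2*(a 3) + 8*(γ.1 0 0)*(γ.1 0 1)^3*(γ.1 1 0)*(γ.1 1 1)*(a 2) + 5*(γ.1 0 0)*(γ.1 0 1)^4*(γ.1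 1 0)*(a 1) + 1*(γ.1 0 0)^2*(γ.1 1 1)^4*(a 4) + 3*(γ.1 0 0)^2*(γ.1 0 1)*(γ.1 1 1)^3*(a 3) + 6*(γ.1 0 0)^2*(γ.1 0 1)^2*(γ.1 1 1)^2*(a 2) + 10*(γ.1 0 0)^2*(γ.1 0 1)^3*(γ.1 1 1)*(a 1) + 15*(γ.1 0 0)^2*(γ.1 0 1)^4*(a 0) := by
    linear_combination (35 / 144 : ℂ) * key 0 + (-31 / 24 : ℂ) * key 1 + (137 / 48 : ℂ) * key 2 + (-121 / 36 : ℂ) * key 3 + (107 / 48 : ℂ) * key 4 + (-19 / 24 : ℂ) * key 5 + (17 / 144 : ℂ) * key 6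
  have h5 : a' 5 = 6*(γ.1 1 0)*(γ.1 1 1)^5*(a 6) + 5*(γ.1 0 1)*(γ.1 1 0)*(γ.1 1 1)^4*(a 5) + 4*(γ.1 0 1)^2*(γ.1 1 0)*(γ.1 1 1)^3*(a 4) + 3*(γ.1 0 1)^3*(γ.1 1 0)*(γ.1 1 1)^2*(a 3) + 2*(γ.1 0 1)^4*(γ.1 1 0)*(γ.1 1 1)*(a 2) + 1*(γ.1 0 1)^5*(γ.1 1 0)*(a 1) + 1*(γ.1 0 0)*(γ.1 1 1)^5*(a 5) + 2*(γ.1 0 0)*(γ.1 0 1)*(γ.1 1 1)^4*(a 4) + 3*(γ.1 0 0)*(γ.1 0 1)^2*(γ.1 1 1)^3*(a 3) + 4*(γ.1 0 0)*(γ.1 0 1)^3*(γ.1 1 1)^2*(a 2) + 5*(γ.1 0 0)*(γ.1 0 1)^4*(γ.1 1 1)*(a 1) + 6*(γ.1 0 0)*(γ.1 0 1)^5*(a 0) := by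
    linear_combination (-7 / 240 : ℂ) * key 0 + (1 / 6 : ℂ) * key 1 + (-19 / 48 : ℂ) * key 2 + (1 / 2 : ℂ) * key 3 + (-17 / 48 : ℂ) * key 4 + (2 / 15 : ℂ) * key 5 + (-1 / 48 : ℂ) * key 6
  have h6 : a' 6 = 1*(γ.1 1 1)^6*(a 6) + 1*(γ.1 0 1)*(γ.1 1 1)^5*(a 5) + 1*(γ.1 0 1)^2*(γ.1 1 1)^4*(a 4) + 1*(γ.1 0 1)^3*(γ.1 1 1)^3*(a 3) + 1*(γ.1 0 1)^4*(γ.1 1 1)^2*(a 2) + 1*(γ.1 0 1)^5*(γ.1 1 1)*(a 1) + 1*(γ.1 0 1)^6*(a 0) := by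
    linear_combination (1 / 720 : ℂ) * key 0 + (-1 / 120 : ℂ) * key 1 + (1 / 48 : ℂ) * key 2 + (-1 / 36 : ℂ) * key 3 + (1 / 48 : ℂ) * key 4 + (-1 / 120 : ℂ) * key 5 + (1 / 720 : ℂ) * key 6
  simp only [invA]
  rw [h0, h1, h2, h3, h4, h5, h6]
  linear_combination (((γ.1 0 0 * γ.1 1 1 - γ.1 0 1 * γ.1 1 0) ^ 5
      + (γ.1 0 0 * γ.1 1 1 - γ.1 0 1 * γ.1 1 0) ^ 4
      + (γ.1 0 0 * γ.1 1 1 - γ.1 0 1 * γ.1 1 0) ^ 3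
      + (γ.1 0 0 * γ.1 1 1 - γ.1 0 1 * γ.1 1 0) ^ 2
      + (γ.1 0 0 * γ.1 1 1 - γ.1 0 1 * γ.1 1 0) + 1)
      * (120 * a 0 * a 6 - 20 * a 1 * a 5 + 8 * a 2 * a 4 - 3 * (a 3) ^ 2)) * hdet

end
end

section
/- Let R = ℤ[c₄, c₆, Δ]/(c₄³ − c₆² − 1728·Δ) graded with deg c₄ = 4, deg c₆ = 6, deg Δ = 12. Then R is a free ℤ-module, and for each k the rank of the degree-k component of R equals the dimension of the space of level-1 complex modular forms of weight k, i.e., it is 0 for k odd or k < 0, and for k ≥ 0 even equals ⌊k/12⌋ + 1 if k ≢ 2 (mod 12) and ⌊k/12⌋ otherwise. -/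
open MvPolynomial

noncomputable section

/-- The relation `c₄³ − c₆² − 1728·Δ` in `ℤ[c₄, c₆, Δ]`, with variables
`X 0 = c₄`, `X 1 = c₆`, `X 2 = Δ`. -/
def rel : MvPolynomial (Fin 3) ℤ := X 0 ^ 3 - X 1 ^ 2 - 1728 * X 2

/-- Deligne's ring `R₁(ℤ) = ℤ[c₄, c₆, Δ]/(c₄³ − c₆² − 1728Δ)`. -/
def R : Type := MvPolynomial (Fin 3) ℤ ⧸ Ideal.span {rel}

instance : CommRing R := Ideal.Quotient.commRing _
instance : Algebra ℤ R := inferInstanceAs (Algebra ℤ (MvPolynomial (Fin 3) ℤ ⧸ Ideal.span {rel}))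

/-- The weights: `deg c₄ = 4`, `deg c₆ = 6`, `deg Δ = 12`. -/
def w : Fin 3 → ℕ := ![4, 6, 12]

/-- The degree-`k` component of `R`: the image in `R` of the weighted-homogeneous
polynomials of weighted degree `k`. -/
def component (k : ℕ) : Submodule ℤ R :=
  (weightedHomogeneousSubmodule ℤ w k).map (Ideal.Quotient.mkₐ ℤ (Ideal.span {rel})).toLinearMap

/-- The dimension of the space of level-1 complex modular forms of weight `k`. -/
def c (k : ℕ) : ℕ := if k % 2 = 1 then 0 else if k % 12 = 2 then k / 12 else k / 12 + 1

namespace DeligneAux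

/-- The monomial `c₄^a c₆^b Δ^d`. -/
def mon (a b d : ℕ) : MvPolynomial (Fin 3) ℤ := X 0 ^ a * X 1 ^ b * X 2 ^ d

/-- The quotient map. -/
def Qmk : MvPolynomial (Fin 3) ℤ →ₐ[ℤ] R := Ideal.Quotient.mkₐ ℤ (Ideal.span {rel})

/-- The exponent finsupp of `mon a b d`. -/
def e (a b d : ℕ) : Fin 3 →₀ ℕ :=
  Finsupp.single 0 a + Finsupp.single 1 b + Finsupp.single 2 d

lemma mon_eq_monomial (a b d : ℕ) : mon a b d = monomial (e a b d) 1 := by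
  simp [mon, e, X_pow_eq_monomial, monomial_mul]

lemma e_apply (a b d : ℕ) : e a b d 0 = a ∧ e a b d 1 = b ∧ e a b d 2 = d := by
  refine ⟨?_, ?_, ?_⟩ <;> simp [e, Finsupp.single_apply]

lemma e_eq (u : Fin 3 →₀ ℕ) : e (u 0) (u 1) (u 2) = u := by
  ext i
  fin_cases i <;> simp [e, Finsupp.single_apply]

lemma weight_eq (u : Fin 3 →₀ ℕ) :
    (Finsupp.weight w) u = 4 * u 0 + 6 * u 1 + 12 * u 2 := by
  rw [Finsupp.weight_apply, Finsupp.sum_fintype]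
  · simp [Fin.sum_univ_three, w, Matrix.cons_val_zero, Matrix.cons_val_one]
    ring
  · intro i; simp

/-- The index type of reduced monomials. -/
abbrev Red : Type := {t : ℕ × ℕ × ℕ // t.1 ≤ 2}

/-- The index type of reduced monomials of weight `k`. -/
abbrev Idx (k : ℕ) : Type :=
  {t : ℕ × ℕ × ℕ // t.1 ≤ 2 ∧ 4 * t.1 + 6 * t.2.1 + 12 * t.2.2 = k}

def vR (t : Red) : R := Qmk (mon t.1.1 t.1.2.1 t.1.2.2)

def vK (k : ℕ) (t : Idx k) : R := Qmk (mon t.1.1 t.1.2.1 t.1.2.2)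

/-- Forgetful map. -/
def g {k : ℕ} (t : Idx k) : Red := ⟨t.1, t.2.1⟩

lemma g_injective {k : ℕ} : Function.Injective (g (k := k)) := by
  intro x y h
  have h1 : (g x).1 = (g y).1 := congrArg (fun s : Red => s.1) h
  exact Subtype.ext h1

lemma e_injective : Function.Injective (fun t : Red => e t.1.1 t.1.2.1 t.1.2.2) := by
  intro x y h
  have h0 := congrFun (congrArg (fun f : Fin 3 →₀ ℕ => (f : Fin 3 → ℕ)) h) 0
  have h1 := congrFun (congrArg (fun f : Fin 3 →₀ ℕ => (f : Fin 3 → ℕ)) h) 1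
  have h2 := congrFun (congrArg (fun f : Fin 3 →₀ ℕ => (f : Fin 3 → ℕ)) h) 2
  simp only [(e_apply _ _ _).1, (e_apply _ _ _).2.1, (e_apply _ _ _).2.2] at h0 h1 h2
  exact Subtype.ext (Prod.ext h0 (Prod.ext h1 h2))

lemma linearIndependent_mon :
    LinearIndependent ℤ (fun t : Red => mon t.1.1 t.1.2.1 t.1.2.2) := by
  have hb := (basisMonomials (Fin 3) ℤ).linearIndependent
  have h := hb.comp (fun t : Red => e t.1.1 t.1.2.1 t.1.2.2) e_injective
  convert h using 1
  funext t
  simp [coe_basisMonomials, Function.comp, mon_eq_monomial]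
  case e'_5 => rfl
  case e'_7 => exact Subsingleton.elim _ _

/-- The image of `rel` under `finSuccEquiv`. -/
def frel : Polynomial (MvPolynomial (Fin 2) ℤ) :=
  Polynomial.X ^ 3 - Polynomial.C (X 0 ^ 2 + 1728 * X 1)

lemma finSuccEquiv_rel : finSuccEquiv ℤ 2 rel = frel := by
  have h1 : (X 1 : MvPolynomial (Fin 3) ℤ) = X (Fin.succ 0) := rfl
  have h2 : (X 2 : MvPolynomial (Fin 3) ℤ) = X (Fin.succ 1) := rfl
  simp only [rel, frel, h1, h2, map_sub, map_pow, map_mul, map_ofNat,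
    finSuccEquiv_X_zero, finSuccEquiv_X_succ, map_add]
  -- push_cast
  ring

lemma monic_frel : frel.Monic := Polynomial.monic_X_pow_sub_C _ (by norm_num)

lemma natDegree_frel : frel.natDegree = 3 := Polynomial.natDegree_X_pow_sub_C

lemma finSuccEquiv_mon (a b d : ℕ) :
    finSuccEquiv ℤ 2 (mon a b d) =
      Polynomial.X ^ a * Polynomial.C (X 0 ^ b * X 1 ^ d) := by
  rw [mon, show (X 1 : MvPolynomial (Fin 3) ℤ) = X (Fin.succ 0) from rfl,
    show (X 2 : MvPolynomial (Fin 3) ℤ) = X (Fin.succ 1) from rfl,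
    map_mul, map_mul, map_pow, map_pow, map_pow, finSuccEquiv_X_zero,
    finSuccEquiv_X_succ, finSuccEquiv_X_succ, ← Polynomial.C_pow, ← Polynomial.C_pow,
    mul_assoc, ← Polynomial.C_mul]

lemma natDegree_le_of_mem_span {P : MvPolynomial (Fin 3) ℤ}
    (hP : P ∈ Submodule.span ℤ (Set.range (fun t : Red => mon t.1.1 t.1.2.1 t.1.2.2))) :
    (finSuccEquiv ℤ 2 P).natDegree ≤ 2 := by
  induction hP using Submodule.span_induction with
  | mem x hx =>
    obtain ⟨⟨⟨a, b, d⟩, ha⟩, rfl⟩ := hx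
    rw [finSuccEquiv_mon]
    refine le_trans Polynomial.natDegree_mul_le ?_
    simp only [Polynomial.natDegree_C, add_zero]
    exact le_trans Polynomial.natDegree_pow_le (by simpa using ha)
  | zero => simp
  | add x y hx hy ihx ihy =>
    rw [map_add]
    exact le_trans (Polynomial.natDegree_add_le _ _) (max_le ihx ihy)
  | smul a x hx ih =>
    have hx' : a • x = (a : MvPolynomial (Fin 3) ℤ) * x := by rw [zsmul_eq_mul]
    rw [hx', map_mul, map_intCast]
    refine le_trans Polynomial.natDegree_mul_le ?_
    rw [Polynomial.natDegree_intCast, zero_add]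
    exact ih

lemma eq_zero_of_mem_span_of_mem_ideal {P : MvPolynomial (Fin 3) ℤ}
    (h1 : P ∈ Submodule.span ℤ (Set.range (fun t : Red => mon t.1.1 t.1.2.1 t.1.2.2)))
    (h2 : P ∈ Ideal.span {rel}) : P = 0 := by
  rw [Ideal.mem_span_singleton'] at h2
  obtain ⟨q, hq⟩ := h2
  by_cases hq0 : q = 0
  · rw [hq0, zero_mul] at hq; exact hq.symm
  · exfalso
    have hd := natDegree_le_of_mem_span h1
    rw [← hq, map_mul, finSuccEquiv_rel] at hd
    have hq' : finSuccEquiv ℤ 2 q ≠ 0 := by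
      simpa using hq0
    rw [mul_comm, Polynomial.Monic.natDegree_mul' monic_frel hq', natDegree_frel] at hd
    omega

lemma Qmk_ker {P : MvPolynomial (Fin 3) ℤ} : Qmk P = 0 ↔ P ∈ Ideal.span {rel} := by
  simp only [Qmk, Ideal.Quotient.mkₐ_eq_mk]
  exact Ideal.Quotient.eq_zero_iff_mem

lemma linearIndependent_vR : LinearIndependent ℤ vR := by
  have h := linearIndependent_mon.map (f := Qmk.toLinearMap) ?_
  · exact h
  · rw [Submodule.disjoint_def]
    intro x hx hker
    change Qmk x = 0 at hker
    rw [Qmk_ker] at hker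
    exact eq_zero_of_mem_span_of_mem_ideal hx hker

lemma linearIndependent_vK (k : ℕ) : LinearIndependent ℤ (vK k) :=
  linearIndependent_vR.comp g g_injective

lemma key (a b d : ℕ) :
    mon (a + 3) b d = mon a (b + 2) d + (1728 : ℤ) • mon a b (d + 1) + mon a b d * rel := by
  simp only [mon, rel, zsmul_eq_mul]
  push_cast
  ring

lemma Qmk_rel : Qmk rel = 0 := Qmk_ker.mpr (Ideal.mem_span_singleton_self rel)

lemma Qmk_reduce (a b d : ℕ) :
    Qmk (mon (a + 3) b d) = Qmk (mon a (b + 2) d) + (1728 : ℤ) • Qmk (mon a b (d + 1)) := by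
  rw [key, map_add, map_add, map_smul, map_mul, Qmk_rel, mul_zero, add_zero]

lemma mem_span_idx (k : ℕ) : ∀ a b d : ℕ, 4 * a + 6 * b + 12 * d = k →
    Qmk (mon a b d) ∈ Submodule.span ℤ (Set.range (vK k)) := by
  intro a
  induction a using Nat.strong_induction_on with
  | _ a ih =>
    intro b d hw
    by_cases ha : a ≤ 2
    · exact Submodule.subset_span ⟨⟨(a, b, d), ⟨ha, hw⟩⟩, rfl⟩
    · obtain ⟨a', rfl⟩ : ∃ a', a = a' + 3 := ⟨a - 3, by omega⟩
      rw [Qmk_reduce]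
      exact add_mem (ih a' (by omega) (b + 2) d (by omega))
        (Submodule.smul_mem _ _ (ih a' (by omega) b (d + 1) (by omega)))

lemma monomial_as (u : Fin 3 →₀ ℕ) (z : ℤ) :
    monomial u z = z • mon (u 0) (u 1) (u 2) := by
  rw [mon_eq_monomial, e_eq, smul_monomial, smul_eq_mul, mul_one]

lemma component_eq (k : ℕ) :
    component k = Submodule.span ℤ (Set.range (vK k)) := by
  apply le_antisymm
  · rintro x ⟨P, hP, rfl⟩
    have hrep : P = ∑ u ∈ P.support, monomial u (coeff u P) :=
      (support_sum_monomial_coeff P).symm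
    show Qmk P ∈ _
    rw [hrep, map_sum]
    refine Submodule.sum_mem _ fun u hu => ?_
    rw [monomial_as, map_smul]
    refine Submodule.smul_mem _ _ ?_
    have hP' : IsWeightedHomogeneous w P k := hP
    have hwt : (Finsupp.weight w) u = k :=
      hP' (MvPolynomial.mem_support_iff.mp hu)
    rw [weight_eq] at hwt
    exact mem_span_idx k _ _ _ hwt
  · rw [Submodule.span_le]
    rintro x ⟨t, rfl⟩
    refine ⟨mon t.1.1 t.1.2.1 t.1.2.2, ?_, rfl⟩
    show IsWeightedHomogeneous w _ k
    rw [mon_eq_monomial]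
    refine isWeightedHomogeneous_monomial _ _ _ ?_
    rw [weight_eq, (e_apply _ _ _).1, (e_apply _ _ _).2.1, (e_apply _ _ _).2.2]
    exact t.2.2

lemma span_vR_top : ⊤ ≤ Submodule.span ℤ (Set.range vR) := by
  rintro x -
  obtain ⟨P, rfl⟩ := Ideal.Quotient.mkₐ_surjective ℤ (Ideal.span {rel}) x
  show Qmk P ∈ _
  have hrep : P = ∑ u ∈ P.support, monomial u (coeff u P) :=
    (support_sum_monomial_coeff P).symm
  rw [hrep, map_sum]
  refine Submodule.sum_mem _ fun u hu => ?_
  rw [monomial_as, map_smul]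
  refine Submodule.smul_mem _ _ ?_
  have h := mem_span_idx (4 * u 0 + 6 * u 1 + 12 * u 2) (u 0) (u 1) (u 2) rfl
  refine Submodule.span_mono ?_ h
  rintro y ⟨t, rfl⟩
  exact ⟨g t, rfl⟩

/-- The unique value of `a` for a weight-`k` reduced monomial. -/
def A (k : ℕ) : ℕ := if k % 6 = 0 then 0 else if k % 6 = 4 then 1 else 2

lemma bound_aux (k a b d : ℕ) (ha : a ≤ 2) (hw : 4 * a + 6 * b + 12 * d = k) : d < c k := by
  simp only [c]; split_ifs <;> omega

lemma invFun_aux (k d : ℕ) (hd : d < c k) :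
    A k ≤ 2 ∧ 4 * A k + 6 * ((k - 4 * A k - 12 * d) / 6) + 12 * d = k := by
  simp only [c] at hd
  simp only [A]
  split_ifs at hd ⊢ <;> omega

lemma left_aux (k a b d : ℕ) (ha : a ≤ 2) (hw : 4 * a + 6 * b + 12 * d = k) :
    A k = a ∧ (k - 4 * A k - 12 * d) / 6 = b := by
  simp only [A]; split_ifs <;> exact ⟨by omega, by omega⟩

/-- The bijection between reduced monomials of weight `k` and `Fin (c k)`. -/
def idxEquiv (k : ℕ) : Idx k ≃ Fin (c k) where
  toFun t := ⟨t.1.2.2, bound_aux k t.1.1 t.1.2.1 t.1.2.2 t.2.1 t.2.2⟩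
  invFun dd := ⟨(A k, (k - 4 * A k - 12 * dd.1) / 6, dd.1),
    (invFun_aux k dd.1 dd.2).1, (invFun_aux k dd.1 dd.2).2⟩
  left_inv t := by
    obtain ⟨⟨a, b, d⟩, ha, hw⟩ := t
    have h := left_aux k a b d ha hw
    apply Subtype.ext
    show ((A k, (k - 4 * A k - 12 * d) / 6, d) : ℕ × ℕ × ℕ) = (a, b, d)
    rw [h.2, h.1]
  right_inv dd := by
    apply Fin.ext
    rfl

end DeligneAux

open DeligneAux in
/-- `R = ℤ[c₄, c₆, Δ]/(c₄³ − c₆² − 1728Δ)`, graded by `deg c₄ = 4`, `deg c₆ = 6`,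
`deg Δ = 12`, is a free `ℤ`-module, and the degree-`k` component has rank equal to the
dimension of the space of level-1 complex modular forms of weight `k`. -/
theorem deligne_ring_graded :
    Module.Free ℤ R ∧ ∀ k : ℕ, Module.rank ℤ (component k) = (c k : Cardinal) := by
  constructor
  · exact Module.Free.of_basis (Module.Basis.mk linearIndependent_vR span_vR_top)
  · intro k
    rw [component_eq k, ← (Module.Basis.span (linearIndependent_vK k)).mk_eq_rank'',
      Cardinal.mk_congr (idxEquiv k), Cardinal.mk_fin]

end
end

section
/- Suppose d: 2ℤ≥0 → ℤ≥0 satisfies d(k) = t(k) for all even k ≤ 12, and d(k) ≤ d(k−10) + c(k)(c(k)+1)/2 and d(k) ≥ t(k) for all even k > 12, where t is the Hilbert function of a graded polynomial ring on generators of degrees 4, 6, 10, 12 and c(k) is the dimension of level-1 weight-k modular forms. Then d(k) = t(k) for all even k ≥ 0. -/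
open Finset

noncomputable section

/-- The Hilbert function of the graded polynomial ring on generators of degrees
`4, 6, 10, 12`: the number of solutions of `4a + 6b + 10c + 12d = k`. -/
def t (k : ℕ) : ℕ :=
  (((range (k + 1) ×ˢ range (k + 1)) ×ˢ (range (k + 1) ×ˢ range (k + 1))).filter
    fun p => 4 * p.1.1 + 6 * p.1.2 + 10 * p.2.1 + 12 * p.2.2 = k).card

def T4 (n k : ℕ) : ℕ := ∑ x ∈ range n, ∑ y ∈ range n, ∑ z ∈ range n, ∑ w ∈ range n,
  if 4*x + 6*y + 10*z + 12*w = k then 1 else 0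
def T3 (n k : ℕ) : ℕ := ∑ x ∈ range n, ∑ y ∈ range n, ∑ w ∈ range n,
  if 4*x + 6*y + 12*w = k then 1 else 0
def T2 (n k : ℕ) : ℕ := ∑ x ∈ range n, ∑ y ∈ range n,
  if 4*x + 6*y = k then 1 else 0
def f3 (k : ℕ) : ℕ := T3 (k+1) k
def g2 (k : ℕ) : ℕ := T2 (k+1) k

lemma t_eq (k : ℕ) : t k = T4 (k+1) k := by
  rw [t, T4, Finset.card_filter, Finset.sum_product, Finset.sum_product]
  refine Finset.sum_congr rfl fun x _ => Finset.sum_congr rfl fun y _ => ?_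
  rw [Finset.sum_product]

lemma shrink {f : ℕ → ℕ} {m n : ℕ} (h : m ≤ n) (h0 : ∀ i, m ≤ i → f i = 0) :
    ∑ i ∈ range n, f i = ∑ i ∈ range m, f i := by
  refine (Finset.sum_subset (Finset.range_subset_range.mpr h) fun x _ hx => ?_).symm
  exact h0 x (by simpa using hx)

lemma T4_bounds {a b e g k : ℕ} (h1 : k < a) (h2 : k < b) (h3 : k < e) (h4 : k < g) :
    (∑ x ∈ range a, ∑ y ∈ range b, ∑ z ∈ range e, ∑ w ∈ range g,
      if 4*x + 6*y + 10*z + 12*w = k then 1 else 0) = T4 (k+1) k := by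
  rw [T4]
  rw [shrink (show k+1 ≤ a by omega) (fun x hx => Finset.sum_eq_zero fun y _ =>
    Finset.sum_eq_zero fun z _ => Finset.sum_eq_zero fun w _ => if_neg (by omega))]
  refine Finset.sum_congr rfl fun x _ => ?_
  rw [shrink (show k+1 ≤ b by omega) (fun y hy => Finset.sum_eq_zero fun z _ =>
    Finset.sum_eq_zero fun w _ => if_neg (by omega))]
  refine Finset.sum_congr rfl fun y _ => ?_
  rw [shrink (show k+1 ≤ e by omega) (fun z hz =>
    Finset.sum_eq_zero fun w _ => if_neg (by omega))]
  refine Finset.sum_congr rfl fun z _ => ?_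
  rw [shrink (show k+1 ≤ g by omega) (fun w hw => if_neg (by omega))]

lemma T3_bounds {a b g k : ℕ} (h1 : k < a) (h2 : k < b) (h4 : k < g) :
    (∑ x ∈ range a, ∑ y ∈ range b, ∑ w ∈ range g,
      if 4*x + 6*y + 12*w = k then 1 else 0) = T3 (k+1) k := by
  rw [T3]
  rw [shrink (show k+1 ≤ a by omega) (fun x hx => Finset.sum_eq_zero fun y _ =>
    Finset.sum_eq_zero fun w _ => if_neg (by omega))]
  refine Finset.sum_congr rfl fun x _ => ?_
  rw [shrink (show k+1 ≤ b by omega) (fun y hy =>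
    Finset.sum_eq_zero fun w _ => if_neg (by omega))]
  refine Finset.sum_congr rfl fun y _ => ?_
  rw [shrink (show k+1 ≤ g by omega) (fun w hw => if_neg (by omega))]

lemma T2_bounds {a b k : ℕ} (h1 : k < a) (h2 : k < b) :
    (∑ x ∈ range a, ∑ y ∈ range b,
      if 4*x + 6*y = k then 1 else 0) = T2 (k+1) k := by
  rw [T2]
  rw [shrink (show k+1 ≤ a by omega) (fun x hx =>
    Finset.sum_eq_zero fun y _ => if_neg (by omega))]
  refine Finset.sum_congr rfl fun x _ => ?_
  rw [shrink (show k+1 ≤ b by omega) (fun y hy => if_neg (by omega))]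

lemma t_step (m : ℕ) : t (m+10) = t m + f3 (m+10) := by
  rw [t_eq (m+10), t_eq m, f3, T4]
  have key : ∀ x y : ℕ,
      (∑ z ∈ range (m+10+1), ∑ w ∈ range (m+10+1),
        if 4*x + 6*y + 10*z + 12*w = m+10 then 1 else 0)
      = (∑ z ∈ range (m+10), ∑ w ∈ range (m+10+1),
          if 4*x + 6*y + 10*z + 12*w = m then 1 else 0)
        + ∑ w ∈ range (m+10+1), if 4*x + 6*y + 12*w = m+10 then 1 else 0 := by
    intro x y
    rw [Finset.sum_range_succ'
      (fun z => ∑ w ∈ range (m+10+1), if 4*x + 6*y + 10*z + 12*w = m+10 then 1 else 0) (m+10)]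
    congr 1
    · refine Finset.sum_congr rfl fun z _ => Finset.sum_congr rfl fun w _ => ?_
      have h : (4*x + 6*y + 10*(z+1) + 12*w = m+10) ↔ (4*x + 6*y + 10*z + 12*w = m) := by omega
      simp only [h]
  simp only [key]
  rw [Finset.sum_congr rfl (fun x _ => Finset.sum_add_distrib), Finset.sum_add_distrib]
  congr 1
  · exact T4_bounds (by omega) (by omega) (by omega) (by omega)

lemma f3_step (m : ℕ) : f3 (m+12) = f3 m + g2 (m+12) := by
  rw [f3, f3, g2, T3]
  have key : ∀ x y : ℕ,
      (∑ w ∈ range (m+12+1), if 4*x + 6*y + 12*w = m+12 then 1 else 0)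
      = (∑ w ∈ range (m+12), if 4*x + 6*y + 12*w = m then 1 else 0)
        + (if 4*x + 6*y = m+12 then 1 else 0) := by
    intro x y
    rw [Finset.sum_range_succ'
      (fun w => if 4*x + 6*y + 12*w = m+12 then 1 else 0) (m+12)]
    congr 1
    · refine Finset.sum_congr rfl fun w _ => ?_
      have h : (4*x + 6*y + 12*(w+1) = m+12) ↔ (4*x + 6*y + 12*w = m) := by omega
      simp only [h]
  simp only [key]
  rw [Finset.sum_congr rfl (fun x _ => Finset.sum_add_distrib), Finset.sum_add_distrib]
  congr 1
  · exact T3_bounds (by omega) (by omega) (by omega)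

lemma count4 {k n : ℕ} (h : k < n) :
    (∑ x ∈ range n, if 4*x = k then 1 else 0) = if k % 4 = 0 then 1 else 0 := by
  rw [← Finset.card_filter]
  by_cases h4 : k % 4 = 0
  · rw [if_pos h4]
    have he : Finset.filter (fun x => 4*x = k) (range n) = {k/4} := by
      ext x
      simp only [Finset.mem_filter, Finset.mem_range, Finset.mem_singleton]
      omega
    rw [he, Finset.card_singleton]
  · rw [if_neg h4]
    have he : Finset.filter (fun x => 4*x = k) (range n) = ∅ := by
      ext x
      simp only [Finset.mem_filter, Finset.mem_range, Finset.notMem_empty, iff_false]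
      omega
    simp [he]

lemma g2_step (m : ℕ) (he : m % 2 = 0) : g2 (m+12) = g2 m + 1 := by
  rw [g2, g2, T2]
  have key : ∀ x : ℕ,
      (∑ y ∈ range (m+12+1), if 4*x + 6*y = m+12 then 1 else 0)
      = (∑ y ∈ range (m+11), if 4*x + 6*y = m then 1 else 0)
        + ((if 4*x = m+6 then 1 else 0) + (if 4*x = m+12 then 1 else 0)) := by
    intro x
    rw [Finset.sum_range_succ' (fun y => if 4*x + 6*y = m+12 then 1 else 0) (m+12)]
    rw [Finset.sum_range_succ' (fun y => if 4*x + 6*(y+1) = m+12 then 1 else 0) (m+11)]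
    have h1 : ∀ y, (4*x + 6*(y+1+1) = m+12) ↔ (4*x + 6*y = m) := by intro y; omega
    have h2 : (4*x + 6*(0+1) = m+12) ↔ (4*x = m+6) := by omega
    have h3 : (4*x + 6*0 = m+12) ↔ (4*x = m+12) := by omega
    simp only [h1, h2, h3]
    omega
  simp only [key]
  rw [Finset.sum_add_distrib, Finset.sum_add_distrib]
  rw [T2_bounds (by omega) (by omega)]
  rw [count4 (show m+6 < m+12+1 by omega), count4 (show m+12 < m+12+1 by omega)]
  have : ((if (m+6) % 4 = 0 then 1 else 0) + if (m+12) % 4 = 0 then 1 else 0) = 1 := by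
    split_ifs <;> omega
  omega

lemma c_step (m : ℕ) (he : m % 2 = 0) : c (m+12) = c m + 1 := by
  rw [c, c]
  split_ifs <;> omega

lemma g2_eq : ∀ k : ℕ, k % 2 = 0 → g2 k = c k := by
  intro k
  induction k using Nat.strong_induction_on with
  | _ k ih =>
    intro he
    by_cases h12 : k < 12
    · interval_cases k <;> first | omega | decide
    · obtain ⟨m, rfl⟩ : ∃ m, k = m + 12 := ⟨k - 12, by omega⟩
      have hm : m % 2 = 0 := by omega
      rw [g2_step m hm, c_step m hm, ih m (by omega) hm]

lemma f3_eq : ∀ k : ℕ, k % 2 = 0 → f3 k = c k * (c k + 1) / 2 := by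
  intro k
  induction k using Nat.strong_induction_on with
  | _ k ih =>
    intro he
    by_cases h12 : k < 12
    · interval_cases k <;> first | omega | decide
    · obtain ⟨m, rfl⟩ : ∃ m, k = m + 12 := ⟨k - 12, by omega⟩
      have hm : m % 2 = 0 := by omega
      rw [f3_step m, g2_eq (m+12) (by omega), c_step m hm, ih m (by omega) hm]
      have h1 : (c m + 1) * (c m + 1 + 1) = c m * (c m + 1) + 2 * (c m + 1) := by ring
      have h2 : 2 ∣ c m * (c m + 1) := (Nat.even_mul_succ_self (c m)).two_dvd
      omega

lemma t_rec (k : ℕ) (h : 10 ≤ k) (he : k % 2 = 0) :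
    t k = t (k - 10) + c k * (c k + 1) / 2 := by
  obtain ⟨m, rfl⟩ : ∃ m, k = m + 10 := ⟨k - 10, by omega⟩
  rw [t_step m, show m + 10 - 10 = m from by omega, f3_eq (m+10) (by omega)]

/-- The inductive argument: if `d` agrees with the Hilbert function `t` in even weights
`k ≤ 12`, and for even `k > 12` satisfies `d(k) ≤ d(k−10) + c(k)(c(k)+1)/2` and
`d(k) ≥ t(k)`, then `d(k) = t(k)` for all even `k`. -/
theorem even_weight_ring_induction (d : ℕ → ℕ)
    (hbase : ∀ k : ℕ, Even k → k ≤ 12 → d k = t k)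
    (hstep : ∀ k : ℕ, Even k → 12 < k → d k ≤ d (k - 10) + c k * (c k + 1) / 2)
    (hlow : ∀ k : ℕ, Even k → 12 < k → t k ≤ d k) :
    ∀ k : ℕ, Even k → d k = t k := by
  intro k
  induction k using Nat.strong_induction_on with
  | _ k ih =>
    intro hk
    by_cases h12 : k ≤ 12
    · exact hbase k hk h12
    · push_neg at h12
      have hk2 : k % 2 = 0 := Nat.even_iff.mp hk
      have hprevE : Even (k - 10) := Nat.even_iff.mpr (by omega)
      have hprev : d (k - 10) = t (k - 10) := by
        by_cases h' : k - 10 ≤ 12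
        · exact hbase _ hprevE h'
        · exact ih (k - 10) (by omega) hprevE
      have ht := t_rec k (by omega) hk2
      have h1 := hstep k hk h12
      have h2 := hlow k hk h12
      omega

end
end
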